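/- arXiv:2107.10060 — 6 statements merged into one kernel-verified Lean document; each statement's English description precedes it below -/
import Mathlib

section
/- Assume Q_{X,Y} is absolutely continuous with respect to P_{X,Y} (i.e., q(x,y) > 0 implies p(x,y) > 0, μ-a.e.), and let C*(y|x) = p(x,y)/p(x) be the optimal AC-GAN classifier. Then E_{(x,y)∼Q_{X,Y}}[log C*(y|x)] = −( KL(Q_{X,Y} ‖ P_{X,Y}) − KL(Q_X ‖ P_X) + H_Q(Y|X) ). Consequently, maximizing the classification term E_{(x,y)∼Q_{X,Y}}[log C*(y|x)] over the generator is equivalent to minimizing KL(Q_{X,Y} ‖ P_{X,Y}) − KL(Q_X ‖ P_X) + H_Q(Y|X). (Theorem 1 of the paper.) -/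
/-!
Theorem 1 (AC-GAN generator objective): if `Q_{X,Y} ≪ P_{X,Y}` and
`C*(y|x) = p(x,y)/p(x)` is the optimal AC-GAN classifier, then
`E_{(x,y)∼Q_{X,Y}}[log C*(y|x)]
   = −( KL(Q_{X,Y} ‖ P_{X,Y}) − KL(Q_X ‖ P_X) + H_Q(Y|X) )`,
so maximizing the classification term over the generator is equivalent to minimizing
`KL(Q_{X,Y}‖P_{X,Y}) − KL(Q_X‖P_X) + H_Q(Y|X)`.

Here `KL(Q_{X,Y}‖P_{X,Y}) = ∫ ∑_y q(x,y) log(q(x,y)/p(x,y)) dμ`,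
`KL(Q_X‖P_X) = ∫ q(x) log(q(x)/p(x)) dμ`, and
`H_Q(Y|X) = −∫ ∑_y q(x,y) log(q(x,y)/q(x)) dμ`, with marginals
`p(x) = ∑ y, p x y`, `q(x) = ∑ y, q x y`.  All integrals are assumed to exist and be
finite (integrability hypotheses).
-/

open MeasureTheory Real

theorem acgan_generator_objective
    {α : Type*} [MeasurableSpace α] (μ : Measure α) [SigmaFinite μ]
    {Y : Type*} [Fintype Y]
    (p q : α → Y → ℝ)
    (hp_meas : ∀ y, Measurable fun x => p x y)
    (hq_meas : ∀ y, Measurable fun x => q x y)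
    (hp_nonneg : ∀ x y, 0 ≤ p x y)
    (hq_nonneg : ∀ x y, 0 ≤ q x y)
    (hp_prob : ∫ x, (∑ y, p x y) ∂μ = 1)
    (hq_prob : ∫ x, (∑ y, q x y) ∂μ = 1)
    (habs : ∀ᵐ x ∂μ, ∀ y, 0 < q x y → 0 < p x y)
    (hInt_obj :
      Integrable (fun x => ∑ y, q x y * Real.log (p x y / ∑ y', p x y')) μ)
    (hInt_klJoint :
      Integrable (fun x => ∑ y, q x y * Real.log (q x y / p x y)) μ)
    (hInt_klMarg :
      Integrable (fun x => (∑ y, q x y) * Real.log ((∑ y, q x y) / (∑ y, p x y))) μ)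
    (hInt_condEnt :
      Integrable (fun x => ∑ y, q x y * Real.log (q x y / ∑ y', q x y')) μ) :
    ∫ x, (∑ y, q x y * Real.log (p x y / ∑ y', p x y')) ∂μ
      = -((∫ x, (∑ y, q x y * Real.log (q x y / p x y)) ∂μ)
          - (∫ x, (∑ y, q x y) * Real.log ((∑ y, q x y) / (∑ y, p x y)) ∂μ)
          + (-(∫ x, (∑ y, q x y * Real.log (q x y / ∑ y', q x y')) ∂μ))) := by
  have key : ∀ᵐ x ∂μ, (∑ y, q x y * Real.log (p x y / ∑ y', p x y'))
      = -(∑ y, q x y * Real.log (q x y / p x y))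
        + (∑ y, q x y) * Real.log ((∑ y, q x y) / (∑ y, p x y))
        + (∑ y, q x y * Real.log (q x y / ∑ y', q x y')) := by
    filter_upwards [habs] with x hx
    rw [← Finset.sum_neg_distrib, Finset.sum_mul, ← Finset.sum_add_distrib,
      ← Finset.sum_add_distrib]
    refine Finset.sum_congr rfl fun y _ => ?_
    rcases eq_or_lt_of_le (hq_nonneg x y) with h0 | hqy
    · simp [← h0]
    · have hpy := hx y hqy
      have hQ : 0 < ∑ y', q x y' :=
        lt_of_lt_of_le hqy (Finset.single_le_sum (fun i _ => hq_nonneg x i)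
          (Finset.mem_univ y))
      have hP : 0 < ∑ y', p x y' :=
        lt_of_lt_of_le hpy (Finset.single_le_sum (fun i _ => hp_nonneg x i)
          (Finset.mem_univ y))
      rw [Real.log_div hpy.ne' hP.ne', Real.log_div hqy.ne' hpy.ne',
        Real.log_div hQ.ne' hP.ne', Real.log_div hqy.ne' hQ.ne']
      ring
  have h1 : Integrable (fun x => -(∑ y, q x y * Real.log (q x y / p x y))) μ :=
    hInt_klJoint.neg
  have h12 : Integrable (fun x => -(∑ y, q x y * Real.log (q x y / p x y))
      + (∑ y, q x y) * Real.log ((∑ y, q x y) / (∑ y, p x y))) μ :=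
    h1.add hInt_klMarg
  rw [integral_congr_ae key, integral_add h12 hInt_condEnt,
    integral_add h1 hInt_klMarg, integral_neg]
  ring
end

section
/- Assume Q_{X,Y} is absolutely continuous with respect to P_{X,Y} (i.e., q(x,y) > 0 implies p(x,y) > 0, μ-a.e.), and let C*_d(y⁺|x) = p(x,y)/(p(x)+q(x)), C*_d(y⁻|x) = q(x,y)/(p(x)+q(x)) be the optimal discriminative classifier. Then E_{(x,y)∼Q_{X,Y}}[log C*_d(y⁺|x)] − E_{(x,y)∼Q_{X,Y}}[log C*_d(y⁻|x)] = −KL(Q_{X,Y} ‖ P_{X,Y}). Consequently, maximizing this classification term over the generator is equivalent to minimizing KL(Q_{X,Y} ‖ P_{X,Y}). (Theorem 2 of the paper.) -/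
/-!
Theorem 2 (ADC-GAN generator objective): if `Q_{X,Y} ≪ P_{X,Y}` and
`C*_d(y⁺|x) = p(x,y)/(p(x)+q(x))`, `C*_d(y⁻|x) = q(x,y)/(p(x)+q(x))` is the optimal
discriminative classifier, then
`E_{(x,y)∼Q_{X,Y}}[log C*_d(y⁺|x)] − E_{(x,y)∼Q_{X,Y}}[log C*_d(y⁻|x)]
   = −KL(Q_{X,Y} ‖ P_{X,Y})`,
so maximizing this classification term over the generator is equivalent to minimizing
`KL(Q_{X,Y} ‖ P_{X,Y}) = ∫ ∑_y q(x,y) log(q(x,y)/p(x,y)) dμ`.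
Marginals: `p(x) = ∑ y, p x y`, `q(x) = ∑ y, q x y`.  All integrals are assumed to
exist and be finite (integrability hypotheses).
-/

open MeasureTheory Real

theorem adcgan_generator_objective
    {α : Type*} [MeasurableSpace α] (μ : Measure α) [SigmaFinite μ]
    {Y : Type*} [Fintype Y]
    (p q : α → Y → ℝ)
    (hp_meas : ∀ y, Measurable fun x => p x y)
    (hq_meas : ∀ y, Measurable fun x => q x y)
    (hp_nonneg : ∀ x y, 0 ≤ p x y)
    (hq_nonneg : ∀ x y, 0 ≤ q x y)
    (hp_prob : ∫ x, (∑ y, p x y) ∂μ = 1)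
    (hq_prob : ∫ x, (∑ y, q x y) ∂μ = 1)
    (habs : ∀ᵐ x ∂μ, ∀ y, 0 < q x y → 0 < p x y)
    (hInt_plus :
      Integrable (fun x =>
        ∑ y, q x y * Real.log (p x y / ((∑ y', p x y') + (∑ y', q x y')))) μ)
    (hInt_minus :
      Integrable (fun x =>
        ∑ y, q x y * Real.log (q x y / ((∑ y', p x y') + (∑ y', q x y')))) μ)
    (hInt_kl :
      Integrable (fun x => ∑ y, q x y * Real.log (q x y / p x y)) μ) :
    (∫ x, (∑ y, q x y * Real.log (p x y / ((∑ y', p x y') + (∑ y', q x y')))) ∂μ)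
      - (∫ x, (∑ y, q x y * Real.log (q x y / ((∑ y', p x y') + (∑ y', q x y')))) ∂μ)
    = -(∫ x, (∑ y, q x y * Real.log (q x y / p x y)) ∂μ) := by
  rw [← integral_sub hInt_plus hInt_minus, ← integral_neg]
  apply integral_congr_ae
  filter_upwards [habs] with x hx
  rw [← Finset.sum_sub_distrib, ← Finset.sum_neg_distrib]
  apply Finset.sum_congr rfl
  intro y _
  rcases eq_or_lt_of_le (hq_nonneg x y) with h0 | hq
  · simp [← h0]
  · have hp := hx y hq
    have hs : 0 < (∑ y', p x y') + (∑ y', q x y') := by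
      have h1 : (0:ℝ) ≤ ∑ y', p x y' := Finset.sum_nonneg fun y' _ => hp_nonneg x y'
      have h2 : (0:ℝ) < ∑ y', q x y' :=
        Finset.sum_pos' (fun y' _ => hq_nonneg x y') ⟨y, Finset.mem_univ y, hq⟩
      linarith
    rw [Real.log_div hp.ne' hs.ne', Real.log_div hq.ne' hs.ne',
      Real.log_div hq.ne' hp.ne']
    ring
end

section
/- Assume Q_{X,Y} is absolutely continuous with respect to P_{X,Y}, let D*(x) = p(x)/(p(x)+q(x)) be the optimal discriminator on marginals and C*_d(y⁺|x) = p(x,y)/(p(x)+q(x)), C*_d(y⁻|x) = q(x,y)/(p(x)+q(x)) the optimal discriminative classifier. Then for λ > 0, the ADC-GAN generator objective under these optimal networks satisfies: E_{x∼P_X}[log D*(x)] + E_{x∼Q_X}[log(1−D*(x))] − λ·( E_{(x,y)∼Q_{X,Y}}[log C*_d(y⁺|x)] − E_{(x,y)∼Q_{X,Y}}[log C*_d(y⁻|x)] ) = 2·JS(P_X ‖ Q_X) − log 4 + λ·KL(Q_{X,Y} ‖ P_{X,Y}). (The theoretical learning objective for the generator of ADC-GAN in Table 1: min_G JS(P_X‖Q_X)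 + λ·KL(Q_{X,Y}‖P_{X,Y}), up to additive and multiplicative constants.) -/
/-!
The theoretical learning objective for the generator of ADC-GAN (Table 1): under the
optimal discriminator `D*(x) = p(x)/(p(x)+q(x))` and the optimal discriminative
classifier `C*_d(y⁺|x) = p(x,y)/(p(x)+q(x))`, `C*_d(y⁻|x) = q(x,y)/(p(x)+q(x))`,
for any `λ > 0`:
`E_{x∼P_X}[log D*(x)] + E_{x∼Q_X}[log(1−D*(x))]
   − λ·( E_{(x,y)∼Q_{X,Y}}[log C*_d(y⁺|x)] − E_{(x,y)∼Q_{X,Y}}[log C*_d(y⁻|x)] )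
 = 2·JS(P_X ‖ Q_X) − log 4 + λ·KL(Q_{X,Y} ‖ P_{X,Y})`,
where `JS(P_X‖Q_X) = ½ KL(P_X‖M) + ½ KL(Q_X‖M)` with `M` of density `(p(x)+q(x))/2`,
and `KL(Q_{X,Y}‖P_{X,Y}) = ∫ ∑_y q(x,y) log(q(x,y)/p(x,y)) dμ`.
Note `1 − D*(x) = q(x)/(p(x)+q(x))`.  Marginals: `p(x) = ∑ y, p x y`,
`q(x) = ∑ y, q x y`.  All integrals are assumed to exist and be finite.
-/

open MeasureTheory Real

theorem adcgan_full_generator_objective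
    {α : Type*} [MeasurableSpace α] (μ : Measure α) [SigmaFinite μ]
    {Y : Type*} [Fintype Y]
    (p q : α → Y → ℝ) (lam : ℝ) (hlam : 0 < lam)
    (hp_meas : ∀ y, Measurable fun x => p x y)
    (hq_meas : ∀ y, Measurable fun x => q x y)
    (hp_nonneg : ∀ x y, 0 ≤ p x y)
    (hq_nonneg : ∀ x y, 0 ≤ q x y)
    (hp_prob : ∫ x, (∑ y, p x y) ∂μ = 1)
    (hq_prob : ∫ x, (∑ y, q x y) ∂μ = 1)
    (habs : ∀ᵐ x ∂μ, ∀ y, 0 < q x y → 0 < p x y)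
    (hInt_Dp :
      Integrable (fun x =>
        (∑ y, p x y) * Real.log ((∑ y, p x y) / ((∑ y, p x y) + (∑ y, q x y)))) μ)
    (hInt_Dq :
      Integrable (fun x =>
        (∑ y, q x y) * Real.log ((∑ y, q x y) / ((∑ y, p x y) + (∑ y, q x y)))) μ)
    (hInt_plus :
      Integrable (fun x =>
        ∑ y, q x y * Real.log (p x y / ((∑ y', p x y') + (∑ y', q x y')))) μ)
    (hInt_minus :
      Integrable (fun x =>
        ∑ y, q x y * Real.log (q x y / ((∑ y', p x y') + (∑ y', q x y')))) μ)
    (hInt_kl :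
      Integrable (fun x => ∑ y, q x y * Real.log (q x y / p x y)) μ)
    (hInt_jsP :
      Integrable (fun x =>
        (∑ y, p x y) * Real.log ((∑ y, p x y) / (((∑ y, p x y) + (∑ y, q x y)) / 2))) μ)
    (hInt_jsQ :
      Integrable (fun x =>
        (∑ y, q x y) * Real.log ((∑ y, q x y) / (((∑ y, p x y) + (∑ y, q x y)) / 2))) μ) :
    (∫ x, (∑ y, p x y) * Real.log ((∑ y, p x y) / ((∑ y, p x y) + (∑ y, q x y))) ∂μ)
      + (∫ x, (∑ y, q x y) * Real.log ((∑ y, q x y) / ((∑ y, p x y) + (∑ y, q x y))) ∂μ)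
      - lam *
        ((∫ x, (∑ y, q x y * Real.log (p x y / ((∑ y', p x y') + (∑ y', q x y')))) ∂μ)
          - (∫ x, (∑ y, q x y * Real.log (q x y / ((∑ y', p x y') + (∑ y', q x y')))) ∂μ))
    = 2 * ((1 / 2) *
            (∫ x, (∑ y, p x y) *
              Real.log ((∑ y, p x y) / (((∑ y, p x y) + (∑ y, q x y)) / 2)) ∂μ)
          + (1 / 2) *
            (∫ x, (∑ y, q x y) *
              Real.log ((∑ y, q x y) / (((∑ y, p x y) + (∑ y, q x y)) / 2)) ∂μ))
      - Real.log 4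
      + lam * (∫ x, (∑ y, q x y * Real.log (q x y / p x y)) ∂μ) := by

  classical
  -- abbreviations
  set a := fun x => ∑ y, p x y with ha
  set b := fun x => ∑ y, q x y with hb
  have ha_nonneg : ∀ x, 0 ≤ a x := fun x => Finset.sum_nonneg fun y _ => hp_nonneg x y
  have hb_nonneg : ∀ x, 0 ≤ b x := fun x => Finset.sum_nonneg fun y _ => hq_nonneg x y
  -- pointwise identity for jsP
  have hjsP_pt : ∀ x, a x * Real.log (a x / ((a x + b x) / 2))
      = a x * Real.log (a x / (a x + b x)) + a x * Real.log 2 := by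
    intro x
    rcases eq_or_lt_of_le (ha_nonneg x) with h0 | h0
    · simp [← h0]
    · have hs : 0 < a x + b x := by linarith [hb_nonneg x]
      rw [div_div_eq_mul_div, mul_comm (a x) 2,
        show 2 * a x / (a x + b x) = 2 * (a x / (a x + b x)) by ring,
        Real.log_mul two_ne_zero (div_pos h0 hs).ne']
      ring
  have hjsQ_pt : ∀ x, b x * Real.log (b x / ((a x + b x) / 2))
      = b x * Real.log (b x / (a x + b x)) + b x * Real.log 2 := by
    intro x
    rcases eq_or_lt_of_le (hb_nonneg x) with h0 | h0
    · simp [← h0]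
    · have hs : 0 < a x + b x := by linarith [ha_nonneg x]
      rw [div_div_eq_mul_div, mul_comm (b x) 2,
        show 2 * b x / (a x + b x) = 2 * (b x / (a x + b x)) by ring,
        Real.log_mul two_ne_zero (div_pos h0 hs).ne']
      ring
  -- integral identities for js
  have hIntP2 : Integrable (fun x => a x * Real.log 2) μ := by
    have := hInt_jsP.sub hInt_Dp
    refine this.congr (Filter.Eventually.of_forall fun x => ?_)
    have := hjsP_pt x; simp only [Pi.sub_apply, ha, hb] at this ⊢; linarith
  have hIntQ2 : Integrable (fun x => b x * Real.log 2) μ := by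
    have := hInt_jsQ.sub hInt_Dq
    refine this.congr (Filter.Eventually.of_forall fun x => ?_)
    have := hjsQ_pt x; simp only [Pi.sub_apply, ha, hb] at this ⊢; linarith
  have hintalog : ∫ x, a x * Real.log 2 ∂μ = Real.log 2 := by
    rw [integral_mul_const]
    simp only [ha]; rw [hp_prob, one_mul]
  have hintblog : ∫ x, b x * Real.log 2 ∂μ = Real.log 2 := by
    rw [integral_mul_const]
    simp only [hb]; rw [hq_prob, one_mul]
  have hJSP : (∫ x, a x * Real.log (a x / ((a x + b x) / 2)) ∂μ)
      = (∫ x, a x * Real.log (a x / (a x + b x)) ∂μ) + Real.log 2 := by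
    rw [show (fun x => a x * Real.log (a x / ((a x + b x) / 2)))
        = fun x => a x * Real.log (a x / (a x + b x)) + a x * Real.log 2 from
        funext hjsP_pt, integral_add hInt_Dp hIntP2, hintalog]
  have hJSQ : (∫ x, b x * Real.log (b x / ((a x + b x) / 2)) ∂μ)
      = (∫ x, b x * Real.log (b x / (a x + b x)) ∂μ) + Real.log 2 := by
    rw [show (fun x => b x * Real.log (b x / ((a x + b x) / 2)))
        = fun x => b x * Real.log (b x / (a x + b x)) + b x * Real.log 2 from
        funext hjsQ_pt, integral_add hInt_Dq hIntQ2, hintblog]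
  -- KL identity: minus - plus = kl, a.e.
  have hKL : (∫ x, (∑ y, q x y * Real.log (q x y / p x y)) ∂μ)
      = (∫ x, (∑ y, q x y * Real.log (q x y / (a x + b x))) ∂μ)
        - (∫ x, (∑ y, q x y * Real.log (p x y / (a x + b x))) ∂μ) := by
    rw [← integral_sub hInt_minus hInt_plus]
    refine integral_congr_ae ?_
    filter_upwards [habs] with x hx
    rw [← Finset.sum_sub_distrib]
    refine Finset.sum_congr rfl fun y _ => ?_
    rcases eq_or_lt_of_le (hq_nonneg x y) with h0 | h0
    · simp [← h0]
    · have hpy := hx y h0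
      have hs : 0 < a x + b x := by
        have : q x y ≤ b x := Finset.single_le_sum (fun y _ => hq_nonneg x y) (Finset.mem_univ y)
        have := ha_nonneg x; linarith
      rw [Real.log_div h0.ne' hpy.ne', Real.log_div h0.ne' hs.ne',
        Real.log_div hpy.ne' hs.ne']
      ring
  have hlog4 : Real.log 4 = 2 * Real.log 2 := by
    rw [show (4:ℝ) = 2 ^ 2 by norm_num, Real.log_pow]; push_cast; ring
  simp only [← ha, ← hb] at *
  rw [hJSP, hJSQ, hlog4, hKL]
  ring
end

section
/- Assume Q_{X,Y} is absolutely continuous with respect to P_{X,Y} (i.e., q(x,y) > 0 implies p(x,y) > 0, μ-a.e.), and let C*(y|x) = p(x,y)/p(x) and C*_mi(y|x) = q(x,y)/q(x) be the twin optimal classifiers of TAC-GAN. Then E_{(x,y)∼Q_{X,Y}}[log C*(y|x)] − E_{(x,y)∼Q_{X,Y}}[log C*_mi(y|x)] = −( KL(Q_{X,Y} ‖ P_{X,Y}) − KL(Q_X ‖ P_X) ). Consequently, maximizing this classification term over the generator is equivalent to minimizing KL(Q_{X,Y} ‖ P_{X,Y}) − KL(Q_X ‖ P_X). (Theorem 3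 of the paper.) -/
/-!
Theorem 3 (TAC-GAN generator objective): if `Q_{X,Y} ≪ P_{X,Y}` and
`C*(y|x) = p(x,y)/p(x)`, `C*_mi(y|x) = q(x,y)/q(x)` are the twin optimal classifiers of
TAC-GAN, then
`E_{(x,y)∼Q_{X,Y}}[log C*(y|x)] − E_{(x,y)∼Q_{X,Y}}[log C*_mi(y|x)]
   = −( KL(Q_{X,Y} ‖ P_{X,Y}) − KL(Q_X ‖ P_X) )`,
so maximizing this classification term over the generator is equivalent to minimizing
`KL(Q_{X,Y}‖P_{X,Y}) − KL(Q_X‖P_X)`, where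
`KL(Q_{X,Y}‖P_{X,Y}) = ∫ ∑_y q(x,y) log(q(x,y)/p(x,y)) dμ` and
`KL(Q_X‖P_X) = ∫ q(x) log(q(x)/p(x)) dμ`.  Marginals: `p(x) = ∑ y, p x y`,
`q(x) = ∑ y, q x y`.  All integrals are assumed to exist and be finite.
-/

open MeasureTheory Real

theorem tacgan_generator_objective
    {α : Type*} [MeasurableSpace α] (μ : Measure α) [SigmaFinite μ]
    {Y : Type*} [Fintype Y]
    (p q : α → Y → ℝ)
    (hp_meas : ∀ y, Measurable fun x => p x y)
    (hq_meas : ∀ y, Measurable fun x => q x y)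
    (hp_nonneg : ∀ x y, 0 ≤ p x y)
    (hq_nonneg : ∀ x y, 0 ≤ q x y)
    (hp_prob : ∫ x, (∑ y, p x y) ∂μ = 1)
    (hq_prob : ∫ x, (∑ y, q x y) ∂μ = 1)
    (habs : ∀ᵐ x ∂μ, ∀ y, 0 < q x y → 0 < p x y)
    (hInt_C : Integrable (fun x => ∑ y, q x y * Real.log (p x y / ∑ y', p x y')) μ)
    (hInt_Cmi : Integrable (fun x => ∑ y, q x y * Real.log (q x y / ∑ y', q x y')) μ)
    (hInt_klJoint : Integrable (fun x => ∑ y, q x y * Real.log (q x y / p x y)) μ)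
    (hInt_klMarg :
      Integrable (fun x => (∑ y, q x y) * Real.log ((∑ y, q x y) / (∑ y, p x y))) μ) :
    (∫ x, (∑ y, q x y * Real.log (p x y / ∑ y', p x y')) ∂μ)
      - (∫ x, (∑ y, q x y * Real.log (q x y / ∑ y', q x y')) ∂μ)
    = -((∫ x, (∑ y, q x y * Real.log (q x y / p x y)) ∂μ)
        - (∫ x, (∑ y, q x y) * Real.log ((∑ y, q x y) / (∑ y, p x y)) ∂μ)) := by
  rw [← integral_sub hInt_C hInt_Cmi, neg_sub, ← integral_sub hInt_klMarg hInt_klJoint]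
  apply integral_congr_ae
  filter_upwards [habs] with x hx
  rw [Finset.sum_mul, ← Finset.sum_sub_distrib, ← Finset.sum_sub_distrib]
  apply Finset.sum_congr rfl
  intro y _
  rcases eq_or_lt_of_le (hq_nonneg x y) with h0 | hqy
  · simp [← h0]
  · have hpy := hx y hqy
    have hpS : 0 < ∑ y', p x y' :=
      lt_of_lt_of_le hpy (Finset.single_le_sum (fun y _ => hp_nonneg x y) (Finset.mem_univ y))
    have hqS : 0 < ∑ y', q x y' :=
      lt_of_lt_of_le hqy (Finset.single_le_sum (fun y _ => hq_nonneg x y) (Finset.mem_univ y))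
    rw [Real.log_div hpy.ne' hpS.ne', Real.log_div hqy.ne' hqS.ne',
        Real.log_div hqy.ne' hpy.ne', Real.log_div hqS.ne' hpS.ne']
    ring
end

section
/- Suppose the generator has reached the target distribution, i.e., q(x,y) = p(x,y) for μ-a.e. x and all y ∈ 𝒴. Then the optimal classifier of the original AC-GAN, C*(y|x) = (p(x,y)+q(x,y))/(p(x)+q(x)), coincides with p(x,y)/p(x) wherever p(x) > 0, and the generator's classification objective under this optimal classifier equals E_{(x,y)∼Q_{X,Y}}[log C*(y|x)] = −H_Q(Y|X) = −H_P(Y|X). In particular, whenever the conditional entropy H_P(Y|X) is strictly positive, this objective is strictly below its supremum value 0, so the classifier still provides momentum to move the generator away from the desired distribution (the original AC-GAN has a biased learning objective). -/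
/-!
Appendix B (bias of the original AC-GAN at the target distribution): suppose the
generator has reached the target distribution, i.e. `q(x,y) = p(x,y)` for μ-a.e. `x`
and all `y`.  Then:
1. the optimal classifier of the original AC-GAN,
   `C*(y|x) = (p(x,y)+q(x,y))/(p(x)+q(x))`, coincides with `p(x,y)/p(x)` wherever
   `p(x) > 0`;
2. the generator's classification objective under this optimal classifier equals
   `E_{(x,y)∼Q_{X,Y}}[log C*(y|x)] = −H_Q(Y|X) = −H_P(Y|X)`, where the conditional
   entropy is `H_Q(Y|X) = −∫ ∑_y q(x,y) log(q(x,y)/q(x)) dμ` (and similarly for `P`);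
3. whenever `H_P(Y|X) > 0`, this objective is strictly below its supremum value `0`
   (so the classifier still provides momentum to move the generator away from the
   desired distribution: the original AC-GAN has a biased learning objective).
Marginals: `p(x) = ∑ y, p x y`, `q(x) = ∑ y, q x y`.  All integrals are assumed to
exist and be finite.
-/

open MeasureTheory Real

/-- The conditional entropy `H(Y|X)` of a joint density `r` on `α × Y` with respect to
the reference measure `μ` (labels counted with counting measure):
`H(Y|X) = −∫ ∑_y r(x,y) log(r(x,y)/r(x)) dμ(x)` where `r(x) = ∑ y, r x y`. -/
noncomputable def condEntropy {α : Type*} [MeasurableSpace α] {Y : Type*} [Fintype Y]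
    (μ : MeasureTheory.Measure α) (r : α → Y → ℝ) : ℝ :=
  -(∫ x, (∑ y, r x y * Real.log (r x y / ∑ y', r x y')) ∂μ)

theorem original_acgan_biased_at_equilibrium
    {α : Type*} [MeasurableSpace α] (μ : Measure α) [SigmaFinite μ]
    {Y : Type*} [Fintype Y]
    (p q : α → Y → ℝ)
    (hp_meas : ∀ y, Measurable fun x => p x y)
    (hq_meas : ∀ y, Measurable fun x => q x y)
    (hp_nonneg : ∀ x y, 0 ≤ p x y)
    (hq_nonneg : ∀ x y, 0 ≤ q x y)
    (hp_prob : ∫ x, (∑ y, p x y) ∂μ = 1)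
    (hq_prob : ∫ x, (∑ y, q x y) ∂μ = 1)
    (heq : ∀ᵐ x ∂μ, ∀ y, q x y = p x y)
    (hInt_obj :
      Integrable (fun x =>
        ∑ y, q x y * Real.log ((p x y + q x y) / ((∑ y', p x y') + (∑ y', q x y')))) μ)
    (hInt_entQ :
      Integrable (fun x => ∑ y, q x y * Real.log (q x y / ∑ y', q x y')) μ)
    (hInt_entP :
      Integrable (fun x => ∑ y, p x y * Real.log (p x y / ∑ y', p x y')) μ) :
    (∀ᵐ x ∂μ, 0 < (∑ y', p x y') → ∀ y,
        (p x y + q x y) / ((∑ y', p x y') + (∑ y', q x y'))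
          = p x y / (∑ y', p x y'))
    ∧ (∫ x, (∑ y, q x y *
          Real.log ((p x y + q x y) / ((∑ y', p x y') + (∑ y', q x y')))) ∂μ)
        = -(condEntropy μ q)
    ∧ condEntropy μ q = condEntropy μ p
    ∧ (0 < condEntropy μ p →
        (∫ x, (∑ y, q x y *
            Real.log ((p x y + q x y) / ((∑ y', p x y') + (∑ y', q x y')))) ∂μ) < 0) := by

  have key : ∀ᵐ x ∂μ, ∀ y,
      (p x y + q x y) / ((∑ y', p x y') + (∑ y', q x y')) = p x y / (∑ y', p x y') := by
    filter_upwards [heq] with x hx y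
    have h1 : p x y + q x y = 2 * p x y := by rw [hx]; ring
    have h2 : (∑ y', p x y') + (∑ y', q x y') = 2 * (∑ y', p x y') := by
      simp only [hx]; ring
    rw [h1, h2, mul_div_mul_left _ _ (two_ne_zero)]
  have hobj : (∫ x, (∑ y, q x y *
        Real.log ((p x y + q x y) / ((∑ y', p x y') + (∑ y', q x y')))) ∂μ)
      = -(condEntropy μ q) := by
    rw [condEntropy, neg_neg]
    refine integral_congr_ae ?_
    filter_upwards [key, heq] with x hx hx' 
    refine Finset.sum_congr rfl fun y _ => ?_
    rw [hx y]
    congr 1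
    simp only [hx']
  have hqp : condEntropy μ q = condEntropy μ p := by
    rw [condEntropy, condEntropy]
    congr 1
    refine integral_congr_ae ?_
    filter_upwards [heq] with x hx
    simp only [hx]
  refine ⟨?_, hobj, hqp, ?_⟩
  · filter_upwards [key] with x hx _ y; exact hx y
  · intro hpos
    rw [hobj, hqp]
    linarith
end

section
/- Assume Q_{X,Y} is absolutely continuous with respect to P_{X,Y} and that q(x) > 0 implies p(x) > 0 μ-a.e., and let D*₊(y|x) = p(x,y)/(p(x)+q(x)) for y ∈ 𝒴 be the optimal label-extended discriminator of AM-GAN. Then the generator's negative objective is bounded below: −E_{(x,y)∼Q_{X,Y}}[log D*₊(y|x)] ≥ KL(Q_{X,Y} ‖ P_{X,Y}) − (1/2)·KL(Q_X ‖ P_X) + H_Q(Y|X) + log 2. Hence AM-GAN's generator, in maximizing E_{Q_{X,Y}}[log D*₊(y|x)], minimizes an upper bound of KL(Q_{X,Y}‖P_{X,Y}) − (1/2)KL(Q_X‖P_X) + H_Q(Y|X) + log 2. (Appendix C of the paper; the inequality follows from the pointwise arithmetic–geometric mean inequality log((p(x)+q(x))/2) ≥ (1/2)log p(x) + (1/2)log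 q(x).) -/
/-!
Appendix C (AM-GAN generator objective bound): if `Q_{X,Y} ≪ P_{X,Y}` and
`q(x) > 0 ⟹ p(x) > 0` μ-a.e., and `D*₊(y|x) = p(x,y)/(p(x)+q(x))` for `y ∈ 𝒴` is the
optimal label-extended discriminator of AM-GAN, then the generator's negative
objective is bounded below:
`−E_{(x,y)∼Q_{X,Y}}[log D*₊(y|x)]
   ≥ KL(Q_{X,Y} ‖ P_{X,Y}) − ½·KL(Q_X ‖ P_X) + H_Q(Y|X) + log 2`,
where `KL(Q_{X,Y}‖P_{X,Y}) = ∫ ∑_y q(x,y) log(q(x,y)/p(x,y)) dμ`,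
`KL(Q_X‖P_X) = ∫ q(x) log(q(x)/p(x)) dμ`, and
`H_Q(Y|X) = −∫ ∑_y q(x,y) log(q(x,y)/q(x)) dμ`.
Hence AM-GAN's generator, in maximizing `E_{Q_{X,Y}}[log D*₊(y|x)]`, minimizes an
upper bound of `KL(Q_{X,Y}‖P_{X,Y}) − ½ KL(Q_X‖P_X) + H_Q(Y|X) + log 2`.
Marginals: `p(x) = ∑ y, p x y`, `q(x) = ∑ y, q x y`.  All integrals are assumed to
exist and be finite.
-/

open MeasureTheory Real

lemma amgan_ptwise {Y : Type*} [Fintype Y] (p q : Y → ℝ)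
    (hp : ∀ y, 0 ≤ p y) (hq : ∀ y, 0 ≤ q y)
    (hj : ∀ y, 0 < q y → 0 < p y)
    (hm : 0 < (∑ y, q y) → 0 < (∑ y, p y)) :
    (∑ y, q y * Real.log (q y / p y))
      - (1 / 2) * ((∑ y, q y) * Real.log ((∑ y, q y) / (∑ y, p y)))
      + (-(∑ y, q y * Real.log (q y / ∑ y', q y')))
      + (∑ y, q y) * Real.log 2
    ≤ -(∑ y, q y * Real.log (p y / ((∑ y', p y') + (∑ y', q y')))) := by
  set P := ∑ y, p y with hP
  set Q := ∑ y, q y with hQ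
  rcases eq_or_lt_of_le (Finset.sum_nonneg (fun y _ => hq y) : (0:ℝ) ≤ Q) with h0 | hQpos
  · have hz : ∀ y, q y = 0 := by
      intro y
      have := (Finset.sum_eq_zero_iff_of_nonneg (fun y _ => hq y)).mp h0.symm
      exact this y (Finset.mem_univ y)
    simp [hz, hQ, ← h0]
  · have hPpos : 0 < P := hm hQpos
    have hPQ : 0 < P + Q := by linarith
    have h1 : ∀ y, q y * Real.log (p y / (P + Q)) = q y * Real.log (p y) - q y * Real.log (P + Q) := by
      intro y
      rcases eq_or_lt_of_le (hq y) with h | h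
      · simp [← h]
      · rw [Real.log_div (hj y h).ne' hPQ.ne']; ring
    have h2 : ∀ y, q y * Real.log (q y / p y) = q y * Real.log (q y) - q y * Real.log (p y) := by
      intro y
      rcases eq_or_lt_of_le (hq y) with h | h
      · simp [← h]
      · rw [Real.log_div h.ne' (hj y h).ne']; ring
    have h3 : ∀ y, q y * Real.log (q y / Q) = q y * Real.log (q y) - q y * Real.log Q := by
      intro y
      rcases eq_or_lt_of_le (hq y) with h | h
      · simp [← h]
      · rw [Real.log_div h.ne' hQpos.ne']; ring
    have e1 : (∑ y, q y * Real.log (p y / (P + Q)))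
        = (∑ y, q y * Real.log (p y)) - Q * Real.log (P + Q) := by
      rw [Finset.sum_congr rfl (fun y _ => h1 y), Finset.sum_sub_distrib, ← Finset.sum_mul]
    have e2 : (∑ y, q y * Real.log (q y / p y))
        = (∑ y, q y * Real.log (q y)) - (∑ y, q y * Real.log (p y)) := by
      rw [Finset.sum_congr rfl (fun y _ => h2 y), Finset.sum_sub_distrib]
    have e3 : (∑ y, q y * Real.log (q y / Q))
        = (∑ y, q y * Real.log (q y)) - Q * Real.log Q := by
      rw [Finset.sum_congr rfl (fun y _ => h3 y), Finset.sum_sub_distrib, ← Finset.sum_mul]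
    have e4 : Real.log (Q / P) = Real.log Q - Real.log P := Real.log_div hQpos.ne' hPpos.ne'
    rw [e1, e2, e3, e4]
    have key : Real.log P + Real.log Q + 2 * Real.log 2 ≤ 2 * Real.log (P + Q) := by
      have hs : Real.sqrt (P * Q) ≤ (P + Q) / 2 := by
        nlinarith [sq_nonneg (Real.sqrt P - Real.sqrt Q), Real.sq_sqrt hPpos.le,
          Real.sq_sqrt hQpos.le, Real.sqrt_mul_self hPpos.le,
          Real.sqrt_mul hPpos.le Q, Real.sqrt_nonneg P, Real.sqrt_nonneg Q]
      have hsp : 0 < Real.sqrt (P * Q) := Real.sqrt_pos.mpr (mul_pos hPpos hQpos)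
      have := Real.log_le_log hsp hs
      rw [Real.log_sqrt (mul_pos hPpos hQpos).le, Real.log_mul hPpos.ne' hQpos.ne',
        Real.log_div (by linarith : (P + Q) ≠ 0) (by norm_num : (2:ℝ) ≠ 0)] at this
      linarith
    nlinarith [key, hQpos.le]

theorem amgan_generator_objective_bound
    {α : Type*} [MeasurableSpace α] (μ : Measure α) [SigmaFinite μ]
    {Y : Type*} [Fintype Y]
    (p q : α → Y → ℝ)
    (hp_meas : ∀ y, Measurable fun x => p x y)
    (hq_meas : ∀ y, Measurable fun x => q x y)
    (hp_nonneg : ∀ x y, 0 ≤ p x y)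
    (hq_nonneg : ∀ x y, 0 ≤ q x y)
    (hp_prob : ∫ x, (∑ y, p x y) ∂μ = 1)
    (hq_prob : ∫ x, (∑ y, q x y) ∂μ = 1)
    (habsJoint : ∀ᵐ x ∂μ, ∀ y, 0 < q x y → 0 < p x y)
    (habsMarg : ∀ᵐ x ∂μ, 0 < (∑ y, q x y) → 0 < (∑ y, p x y))
    (hInt_obj :
      Integrable (fun x =>
        ∑ y, q x y * Real.log (p x y / ((∑ y', p x y') + (∑ y', q x y')))) μ)
    (hInt_klJoint :
      Integrable (fun x => ∑ y, q x y * Real.log (q x y / p x y)) μ)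
    (hInt_klMarg :
      Integrable (fun x => (∑ y, q x y) * Real.log ((∑ y, q x y) / (∑ y, p x y))) μ)
    (hInt_condEnt :
      Integrable (fun x => ∑ y, q x y * Real.log (q x y / ∑ y', q x y')) μ) :
    -(∫ x, (∑ y, q x y * Real.log (p x y / ((∑ y', p x y') + (∑ y', q x y')))) ∂μ)
      ≥ (∫ x, (∑ y, q x y * Real.log (q x y / p x y)) ∂μ)
        - (1 / 2) * (∫ x, (∑ y, q x y) * Real.log ((∑ y, q x y) / (∑ y, p x y)) ∂μ)
        + (-(∫ x, (∑ y, q x y * Real.log (q x y / ∑ y', q x y')) ∂μ))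
        + Real.log 2 := by
  have hQint : Integrable (fun x => ∑ y, q x y) μ := by
    by_contra h
    rw [integral_undef h] at hq_prob
    norm_num at hq_prob
  set G : α → ℝ := fun x =>
    (∑ y, q x y * Real.log (q x y / p x y))
      - (1 / 2) * ((∑ y, q x y) * Real.log ((∑ y, q x y) / (∑ y, p x y)))
      + (-(∑ y, q x y * Real.log (q x y / ∑ y', q x y')))
      + (∑ y, q x y) * Real.log 2 with hG
  have hGint : Integrable G μ :=
    (((hInt_klJoint.sub (hInt_klMarg.const_mul _)).add hInt_condEnt.neg).add
      (hQint.mul_const _))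
  have hle : ∫ x, G x ∂μ ≤ ∫ x,
      (-(∑ y, q x y * Real.log (p x y / ((∑ y', p x y') + (∑ y', q x y'))))) ∂μ := by
    refine integral_mono_ae hGint hInt_obj.neg ?_
    filter_upwards [habsJoint, habsMarg] with x hjx hmx
    exact amgan_ptwise (fun y => p x y) (fun y => q x y)
      (fun y => hp_nonneg x y) (fun y => hq_nonneg x y) hjx hmx
  have h2 : Integrable (fun x =>
      (1 / 2 : ℝ) * ((∑ y, q x y) * Real.log ((∑ y, q x y) / (∑ y, p x y)))) μ :=
    hInt_klMarg.const_mul _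
  have h3 : Integrable (fun x =>
      (∑ y, q x y * Real.log (q x y / p x y))
        - (1 / 2) * ((∑ y, q x y) * Real.log ((∑ y, q x y) / (∑ y, p x y)))) μ :=
    hInt_klJoint.sub h2
  have h4 : Integrable (fun x => -(∑ y, q x y * Real.log (q x y / ∑ y', q x y'))) μ :=
    hInt_condEnt.neg
  have h5 : Integrable (fun x =>
      (∑ y, q x y * Real.log (q x y / p x y))
        - (1 / 2) * ((∑ y, q x y) * Real.log ((∑ y, q x y) / (∑ y, p x y)))
        + (-(∑ y, q x y * Real.log (q x y / ∑ y', q x y')))) μ := h3.add h4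
  have h1 : Integrable (fun x => (∑ y, q x y) * Real.log 2) μ := hQint.mul_const _
  have eG : ∫ x, G x ∂μ =
      (∫ x, (∑ y, q x y * Real.log (q x y / p x y)) ∂μ)
        - (1 / 2) * (∫ x, (∑ y, q x y) * Real.log ((∑ y, q x y) / (∑ y, p x y)) ∂μ)
        + (-(∫ x, (∑ y, q x y * Real.log (q x y / ∑ y', q x y')) ∂μ))
        + Real.log 2 := by
    rw [hG, integral_add h5 h1, integral_add h3 h4, integral_sub hInt_klJoint h2,
      integral_const_mul, integral_neg, integral_mul_const, hq_prob, one_mul]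
  rw [integral_neg] at hle
  rw [eG] at hle
  exact hle
end
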